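/- arXiv:2206.14720 — 4 statements merged into one kernel-verified Lean document; each statement's English description precedes it below -/
import Mathlib

section
/- Fix e ≥ 2 and r ≥ 1. Given β-sets B_1, ..., B_r, the set B = ⨆_{k=1}^r ψ_k(B_k) is again a β-set. Moreover, the resulting map Ψ_r from r-tuples of β-sets to β-sets is a bijection. -/
/-- A partition: a weakly decreasing sequence of non-negative integers,
eventually zero.  `part i` is the `(i+1)`-st part `λ_{i+1}`. -/
structure PartitionSeq where
  part : ℕ → ℕ
  antitone : ∀ i j : ℕ, i ≤ j → part j ≤ part i
  eventually_zero : ∃ N : ℕ, ∀ i : ℕ, N ≤ i → part i = 0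

/-- The empty partition. -/
def zeroPart : PartitionSeq := ⟨fun _ => 0, fun _ _ _ => le_rfl, ⟨0, fun _ _ => rfl⟩⟩

/-- A β-set: a set of integers containing all sufficiently small integers and
excluding all sufficiently large ones. -/
def IsBetaSet (B : Set ℤ) : Prop :=
  (∃ N : ℤ, ∀ z : ℤ, z < N → z ∈ B) ∧ (∃ M : ℤ, ∀ z : ℤ, M < z → z ∉ B)

/-- The β-set `B_s(λ) = {λ_i - i + s : i ≥ 1}`. -/
def betaSet (lam : PartitionSeq) (s : ℤ) : Set ℤ :=
  {b : ℤ | ∃ i : ℕ, b = (lam.part i : ℤ) - ((i : ℤ) + 1) + s}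

/-- `|λ|`, the sum of the parts of a partition. -/
noncomputable def psize (lam : PartitionSeq) : ℕ := ∑ᶠ i, lam.part i

/-- The pair `(λ, s)` corresponding to a β-set (junk value if none exists). -/
noncomputable def partOfBeta (B : Set ℤ) : PartitionSeq × ℤ :=
  letI := Classical.propDecidable (∃ p : PartitionSeq × ℤ, betaSet p.1 p.2 = B)
  if h : ∃ p : PartitionSeq × ℤ, betaSet p.1 p.2 = B then h.choose else (zeroPart, 0)

/-- The β-set `C_i` of runner `i`: the rows `m` with a bead at position `m*e+i`. -/
def quotSetB (e : ℕ) (B : Set ℤ) (i : ℕ) : Set ℤ :=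
  {m : ℤ | m * (e : ℤ) + (i : ℤ) ∈ B}

/-- `ρ_i`: the `i`-th component of the `e`-quotient of the configuration `B`. -/
noncomputable def rhoB (e : ℕ) (B : Set ℤ) (i : ℕ) : PartitionSeq :=
  (partOfBeta (quotSetB e B i)).1

/-- `t_i`: the charge of runner `i` of the configuration `B`. -/
noncomputable def tB (e : ℕ) (B : Set ℤ) (i : ℕ) : ℤ :=
  (partOfBeta (quotSetB e B i)).2

/-- `|ρ| = Σ_i |ρ_i|`, the size of the `e`-quotient of `B`. -/
noncomputable def wtB (e : ℕ) (B : Set ℤ) : ℕ :=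
  ∑ i ∈ Finset.range e, psize (rhoB e B i)

/-- `B` is a (`c`-shifted) Rouquier configuration: `wt ≤ t_{i+1} - t_i + c`
for all `0 ≤ i < e-1`.  `c = 1` gives Rouquier, `c = r` gives `r`-Rouquier. -/
def IsRouquierB (e : ℕ) (B : Set ℤ) (c : ℤ) : Prop :=
  ∀ i : ℕ, i + 1 < e → (wtB e B : ℤ) ≤ tB e B (i + 1) - tB e B i + c

/-- Uglov's map `ψ_k`: sends `me + i` (with `0 ≤ i < e`) to `((m+1)r - k)e + i`. -/
def psi (e r k x : ℤ) : ℤ := ((Int.ediv x e + 1) * r - k) * e + Int.emod x e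

/-- Uglov's map `Ψ_r` on β-sets: `⨆_{k=1}^r ψ_k(B_k)`. -/
def uglovSet (e r : ℕ) (B : Fin r → Set ℤ) : Set ℤ :=
  ⋃ k : Fin r, psi (e : ℤ) (r : ℤ) (((k : ℕ) : ℤ) + 1) '' B k

/-- The number of nodes of the Young diagram of `λ` with `e`-residue `j`
(for charge `0`). -/
noncomputable def resCount (e : ℕ) (lam : PartitionSeq) (j : ZMod e) : ℕ :=
  {p : ℕ × ℕ | p.2 < lam.part p.1 ∧ ((p.2 : ZMod e) - (p.1 : ZMod e) = j)}.ncard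

/-- The block relation `λ ∼_e μ` for partitions: equal size and equal
multisets of `e`-residues. -/
def SimE (e : ℕ) (lam mu : PartitionSeq) : Prop :=
  psize lam = psize mu ∧ ∀ j : ZMod e, resCount e lam j = resCount e mu j

/-- The number of nodes of the Young diagram of a multipartition with
`e`-residue `j`, for the multicharge `s`. -/
noncomputable def mresCount (e : ℕ) {r : ℕ} (lam : Fin r → PartitionSeq)
    (s : Fin r → ℤ) (j : ZMod e) : ℕ :=
  ∑ k : Fin r, {p : ℕ × ℕ |
    p.2 < (lam k).part p.1 ∧ ((s k : ZMod e) + (p.2 : ZMod e) - (p.1 : ZMod e) = j)}.ncard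

/-- The block relation `(λ, s) ≈_e (μ, s)` for multipartitions with the same
multicharge: equal size and equal multisets of `e`-residues. -/
def MSimE (e : ℕ) {r : ℕ} (lam mu : Fin r → PartitionSeq) (s : Fin r → ℤ) : Prop :=
  (∑ k, psize (lam k)) = (∑ k, psize (mu k)) ∧
    ∀ j : ZMod e, mresCount e lam s j = mresCount e mu s j

/-- The `e`-core abacus configuration of `B`: all beads pushed up on their
runners. -/
noncomputable def eCoreSet (e : ℕ) (B : Set ℤ) : Set ℤ :=
  {b : ℤ | ∃ i : ℕ, i < e ∧ ∃ m : ℤ, m < tB e B i ∧ b = m * (e : ℤ) + (i : ℤ)}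

/-- The `e`-core of `λ` (computed via the abacus with charge `s`). -/
noncomputable def eCore (e : ℕ) (lam : PartitionSeq) (s : ℤ) : PartitionSeq :=
  (partOfBeta (eCoreSet e (betaSet lam s))).1

/-- The `e`-weight of `λ`: `(|λ| - |e-core(λ)|)/e`. -/
noncomputable def eWeight (e : ℕ) (lam : PartitionSeq) (s : ℤ) : ℤ :=
  ((psize lam : ℤ) - (psize (eCore e lam s) : ℤ)) / (e : ℤ)

/-- Replace the bead at position `b` by a bead at position `c`. -/
def replaceBead (S : Set ℤ) (b c : ℤ) : Set ℤ := insert c (S \ {b})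

/-- Perform two bead replacements, `b₁ ↦ c₁` in component `k₁` and then
`b₂ ↦ c₂` in component `k₂`. -/
def twoBeadUpdate {ι : Type*} [DecidableEq ι] (B : ι → Set ℤ)
    (k₁ : ι) (b₁ c₁ : ℤ) (k₂ : ι) (b₂ c₂ : ℤ) : ι → Set ℤ :=
  Function.update (Function.update B k₁ (replaceBead (B k₁) b₁ c₁)) k₂
    (replaceBead (Function.update B k₁ (replaceBead (B k₁) b₁ c₁) k₂) b₂ c₂)

/-- Type-1 move at level `N`: decrease a β-number by `N` in component `k₁`
and increase a β-number by `N` in component `k₂`. -/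
def Move1 {ι : Type*} [DecidableEq ι] (N : ℤ) (B B' : ι → Set ℤ) : Prop :=
  ∃ k₁ k₂ : ι, ∃ b₁ b₂ : ℤ,
    b₁ ∈ B k₁ ∧ b₁ - N ∉ B k₁ ∧ b₂ ∈ B k₂ ∧ b₂ + N ∉ B k₂ ∧
    B' = twoBeadUpdate B k₁ b₁ (b₁ - N) k₂ b₂ (b₂ + N)

/-- Type-2 move at level `N`: for `b₁ ≡ b₂ (mod N)` and `h > 0`, replace `b₁`
by `b₁ + h` in component `k₁` and `b₂ + h` by `b₂` in component `k₂`. -/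
def Move2 {ι : Type*} [DecidableEq ι] (N : ℤ) (B B' : ι → Set ℤ) : Prop :=
  ∃ k₁ k₂ : ι, ∃ b₁ b₂ h : ℤ, 0 < h ∧ ((N : ℤ) ∣ b₁ - b₂) ∧
    b₁ ∈ B k₁ ∧ b₁ + h ∉ B k₁ ∧ b₂ ∉ B k₂ ∧ b₂ + h ∈ B k₂ ∧
    B' = twoBeadUpdate B k₁ b₁ (b₁ + h) k₂ (b₂ + h) b₂

/-- The block relation on tuples of abacus configurations: the reflexive
transitive closure of type-1 and type-2 moves at level `N`. -/
def BlockEq {ι : Type*} [DecidableEq ι] (N : ℤ) (B B' : ι → Set ℤ) : Prop :=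
  Relation.ReflTransGen (fun X Y => Move1 N X Y ∨ Move2 N X Y) B B'

/-- The stretching operation on a single abacus configuration: shift the
content of runner `i` by `M i`, leaving the `e`-quotient unchanged. -/
def strSet (e : ℕ) (M : ℕ → ℤ) (B : Set ℤ) : Set ℤ :=
  {b : ℤ | ∃ i : ℕ, i < e ∧ ∃ m : ℤ, m * (e : ℤ) + (i : ℤ) ∈ B ∧
    b = (m + M i) * (e : ℤ) + (i : ℤ)}


private lemma psi_eq (e r k x : ℤ) : psi e r k x = ((x / e + 1) * r - k) * e + x % e := rfl

private lemma div_mod_key {e : ℤ} (he : 0 < e) (A i : ℤ) (h0 : 0 ≤ i) (h1 : i < e) :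
    (A * e + i) / e = A ∧ (A * e + i) % e = i := by
  constructor
  · rw [add_comm, Int.add_mul_ediv_right _ _ he.ne', Int.ediv_eq_zero_of_lt h0 h1, zero_add]
  · rw [add_comm, Int.add_mul_emod_self_right, Int.emod_eq_of_lt h0 h1]

private lemma psi_spec (e r k x : ℤ) (he : 0 < e) :
    (psi e r k x) / e = (x / e + 1) * r - k ∧ (psi e r k x) % e = x % e := by
  rw [psi_eq]
  exact div_mod_key he _ _ (Int.emod_nonneg x he.ne') (Int.emod_lt_of_pos x he)

private lemma psi_inj' {e r k k' x x' : ℤ} (he : 0 < e) (hr : 0 < r)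
    (ha : 1 ≤ k) (hb : k ≤ r) (ha' : 1 ≤ k') (hb' : k' ≤ r)
    (h : psi e r k x = psi e r k' x') : k = k' ∧ x = x' := by
  have s1 := psi_spec e r k x he
  have s2 := psi_spec e r k' x' he
  rw [h] at s1
  have hd : (x / e + 1) * r - k = (x' / e + 1) * r - k' := by rw [← s1.1, s2.1]
  have hm : x % e = x' % e := by rw [← s1.2, s2.2]
  have hc : k' - k = (x' / e - x / e) * r := by linear_combination hd
  have hc1 : x' / e - x / e < 1 := by nlinarith
  have hc2 : -1 < x' / e - x / e := by nlinarith
  have hc0 : x' / e - x / e = 0 := by omega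
  have hkk : k = k' := by rw [hc0] at hc; omega
  refine ⟨hkk, ?_⟩
  have hxd : x / e = x' / e := by omega
  have e1 := Int.mul_ediv_add_emod x e
  have e2 := Int.mul_ediv_add_emod x' e
  rw [hxd, hm] at e1
  omega

private lemma psi_surj' {e r k y : ℤ} (he : 0 < e) (hr : 0 < r)
    (hdvd : r ∣ y / e + k) : ∃ x, psi e r k x = y := by
  obtain ⟨q, hq⟩ := hdvd
  refine ⟨(q - 1) * e + y % e, ?_⟩
  have h0 : 0 ≤ y % e := Int.emod_nonneg y he.ne'
  have h1 : y % e < e := Int.emod_lt_of_pos y he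
  obtain ⟨hd, hm⟩ := div_mod_key he (q - 1) _ h0 h1
  rw [psi_eq, hd, hm]
  have hy := Int.mul_ediv_add_emod y e
  linear_combination hy - e * hq

private lemma psi_bounds' {e r k : ℤ} (x : ℤ) (he : 0 < e) (ha : 1 ≤ k) (hb : k ≤ r) :
    r * x - r * e ≤ psi e r k x ∧ psi e r k x ≤ r * x + r * e := by
  have h0 : 0 ≤ x % e := Int.emod_nonneg x he.ne'
  have h1 : x % e < e := Int.emod_lt_of_pos x he
  have hx := Int.mul_ediv_add_emod x e
  rw [psi_eq]
  constructor <;>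
    nlinarith [hx, h0, h1,
      mul_le_mul_of_nonneg_right (by omega : x % e ≤ e) (by omega : (0:ℤ) ≤ r - 1),
      mul_nonneg (by omega : (0:ℤ) ≤ r - k) he.le]

private lemma exists_k' (r d : ℤ) (hr : 0 < r) : ∃ k, 1 ≤ k ∧ k ≤ r ∧ r ∣ d + k := by
  have h0 : 0 ≤ d % r := Int.emod_nonneg d hr.ne'
  have h1 : d % r < r := Int.emod_lt_of_pos d hr
  have hdm := Int.mul_ediv_add_emod d r
  exact ⟨r - d % r, by omega, by omega, ⟨d / r + 1, by linarith⟩⟩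

theorem stmt6 (e r : ℤ) (he : 2 ≤ e) (hr : 1 ≤ r) :
    Set.BijOn
      (fun f : Set.Icc (1 : ℤ) r → Set ℤ =>
        ⋃ k : Set.Icc (1 : ℤ) r, psi e r (k : ℤ) '' f k)
      {f | ∀ k, IsBetaSet (f k)} {B : Set ℤ | IsBetaSet B} := by
  have he0 : (0:ℤ) < e := by omega
  have hr0 : (0:ℤ) < r := by omega
  haveI hne : Nonempty ↥(Set.Icc (1:ℤ) r) := ⟨⟨1, Set.mem_Icc.mpr ⟨le_refl 1, hr⟩⟩⟩
  have hk1 : ∀ k : ↥(Set.Icc (1:ℤ) r), 1 ≤ (k:ℤ) := fun k => (Set.mem_Icc.mp k.2).1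
  have hk2 : ∀ k : ↥(Set.Icc (1:ℤ) r), (k:ℤ) ≤ r := fun k => (Set.mem_Icc.mp k.2).2
  refine ⟨?_, ?_, ?_⟩
  · -- MapsTo
    intro f hf
    simp only [Set.mem_setOf_eq] at hf ⊢
    constructor
    · -- all small integers are in the union
      set N0 : ℤ := Finset.univ.inf' Finset.univ_nonempty
        (fun k : ↥(Set.Icc (1:ℤ) r) => (hf k).1.choose) with hN0
      refine ⟨r * N0 - r * e, fun y hy => ?_⟩
      obtain ⟨k, hka, hkb, hdvd⟩ := exists_k' r (y / e) hr0
      obtain ⟨x, hx⟩ := psi_surj' he0 hr0 hdvd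
      have hb := (psi_bounds' (r := r) (k := k) x he0 hka hkb).1
      rw [hx] at hb
      have hxN : x < N0 := by
        have h2 : r * x < r * N0 := by linarith
        exact lt_of_mul_lt_mul_left h2 hr0.le
      set kk : ↥(Set.Icc (1:ℤ) r) := ⟨k, Set.mem_Icc.mpr ⟨hka, hkb⟩⟩
      have hxk : x < (hf kk).1.choose :=
        lt_of_lt_of_le hxN (Finset.inf'_le _ (Finset.mem_univ kk))
      exact Set.mem_iUnion.mpr ⟨kk, ⟨x, (hf kk).1.choose_spec x hxk, hx⟩⟩
    · -- all large integers are excluded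
      set M0 : ℤ := Finset.univ.sup' Finset.univ_nonempty
        (fun k : ↥(Set.Icc (1:ℤ) r) => (hf k).2.choose) with hM0
      refine ⟨r * M0 + r * e, fun y hy hmem => ?_⟩
      simp only [Set.mem_iUnion, Set.mem_image] at hmem
      obtain ⟨k, x, hxB, hxy⟩ := hmem
      have hb := (psi_bounds' (r := r) (k := (k:ℤ)) x he0 (hk1 k) (hk2 k)).2
      rw [hxy] at hb
      have hMk : (hf k).2.choose ≤ M0 := by
        rw [hM0]
        exact Finset.le_sup' (fun k : ↥(Set.Icc (1:ℤ) r) => (hf k).2.choose)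
          (Finset.mem_univ k)
      have hxM : (hf k).2.choose < x := by
        have h2 : r * (hf k).2.choose < r * x := by
          nlinarith [mul_le_mul_of_nonneg_left hMk hr0.le]
        exact lt_of_mul_lt_mul_left h2 hr0.le
      exact (hf k).2.choose_spec x hxM hxB
  · -- InjOn
    have main : ∀ f g : ↥(Set.Icc (1:ℤ) r) → Set ℤ,
        (⋃ k : ↥(Set.Icc (1:ℤ) r), psi e r (k:ℤ) '' f k) =
          (⋃ k : ↥(Set.Icc (1:ℤ) r), psi e r (k:ℤ) '' g k) →
        ∀ (k : ↥(Set.Icc (1:ℤ) r)) (x : ℤ), x ∈ f k → x ∈ g k := by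
      intro f g h k x hx
      have hmem : psi e r (k:ℤ) x ∈ ⋃ k' : ↥(Set.Icc (1:ℤ) r), psi e r (k':ℤ) '' g k' := by
        rw [← h]
        exact Set.mem_iUnion.mpr ⟨k, ⟨x, hx, rfl⟩⟩
      simp only [Set.mem_iUnion, Set.mem_image] at hmem
      obtain ⟨k', x', hx', heq⟩ := hmem
      obtain ⟨hkk, hxx⟩ := psi_inj' he0 hr0 (hk1 k') (hk2 k') (hk1 k) (hk2 k) heq
      have : k' = k := Subtype.ext hkk
      rw [← this, ← hxx]
      exact hx'
    intro f _ g _ hfg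
    simp only at hfg
    funext k
    ext x
    exact ⟨fun hx => main f g hfg k x hx, fun hx => main g f hfg.symm k x hx⟩
  · -- SurjOn
    intro B hB
    simp only [Set.mem_setOf_eq] at hB
    refine ⟨fun k : ↥(Set.Icc (1:ℤ) r) => psi e r (k:ℤ) ⁻¹' B, ?_, ?_⟩
    · intro k
      obtain ⟨⟨N, hN⟩, ⟨M, hM⟩⟩ := hB
      constructor
      · refine ⟨min 0 (N - r * e), fun z hz => ?_⟩
        have hz0 : z < 0 := lt_of_lt_of_le hz (min_le_left _ _)
        have hz1 : z < N - r * e := lt_of_lt_of_le hz (min_le_right _ _)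
        have hb := (psi_bounds' (r := r) (k := (k:ℤ)) z he0 (hk1 k) (hk2 k)).2
        have hrz : r * z ≤ z := by nlinarith
        exact hN _ (by linarith)
      · refine ⟨max 0 (M + r * e), fun z hz hmem => ?_⟩
        have hz0 : 0 < z := lt_of_le_of_lt (le_max_left _ _) hz
        have hz1 : M + r * e < z := lt_of_le_of_lt (le_max_right _ _) hz
        have hb := (psi_bounds' (r := r) (k := (k:ℤ)) z he0 (hk1 k) (hk2 k)).1
        have hrz : z ≤ r * z := by nlinarith
        exact hM _ (by linarith) hmem
    · simp only
      apply Set.Subset.antisymm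
      · exact Set.iUnion_subset fun k => Set.image_preimage_subset _ _
      · intro y hy
        obtain ⟨k, hka, hkb, hdvd⟩ := exists_k' r (y / e) hr0
        obtain ⟨x, hx⟩ := psi_surj' he0 hr0 hdvd
        refine Set.mem_iUnion.mpr ⟨⟨k, Set.mem_Icc.mpr ⟨hka, hkb⟩⟩, ⟨x, ?_, hx⟩⟩
        show psi e r k x ∈ B
        rw [hx]
        exact hy
end

section
/- Let r ≥ 2, e ≥ 2, s ∈ ℤ, and let λ, μ be partitions with λ ∼_e μ. Then η(λ, s) →^r_1 η(μ, s) (a type-1 move at level r on the e-quotient data) if and only if Φ_r(λ, s) →^e_1 Φ_r(μ, s) (a type-1 move at level e on the r-tuple of abacuses). -/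
/-! Write a bead of the `r`-tuple `Φ_r(λ, s)` as `(k, m e + i)` with `0 ≤ i < e`, and a bead of the
`e`-quotient `η(λ, s)` as `(i, q)`. Since `ψ_{k+1}(m e + i) = (m r + (r - 1 - k)) e + i`, the
bijection `(k, m e + i) ↦ (i, m r + (r - 1 - k))` matches the beads of the two configurations, and
it turns a shift by `e` inside a component into a shift by `r` along a runner. A relabelling of
bead positions with this property carries type-1 moves at level `e` exactly onto type-1 moves at
level `r`. -/

section Beads

variable {ι κ : Type*}

def beads (B : ι → Set ℤ) : Set (ι × ℤ) := {p | p.2 ∈ B p.1}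

theorem beads_injective : Function.Injective (beads (ι := ι)) := fun _ _ h =>
  funext fun i => Set.ext fun n => Set.ext_iff.1 h (i, n)

variable [DecidableEq ι]

theorem beads_update_replaceBead (B : ι → Set ℤ) (k : ι) (b c : ℤ) :
    beads (Function.update B k (replaceBead (B k) b c)) = insert (k, c) (beads B \ {(k, b)}) := by
  ext ⟨i, n⟩
  by_cases hi : i = k
  · subst hi; simp [beads, replaceBead]
  · simp [beads, replaceBead, hi]

theorem beads_twoBeadUpdate (B : ι → Set ℤ) (k₁ : ι) (b₁ c₁ : ℤ) (k₂ : ι) (b₂ c₂ : ℤ) :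
    beads (twoBeadUpdate B k₁ b₁ c₁ k₂ b₂ c₂) =
      insert (k₂, c₂) (insert (k₁, c₁) (beads B \ {(k₁, b₁)}) \ {(k₂, b₂)}) := by
  rw [twoBeadUpdate, beads_update_replaceBead, beads_update_replaceBead]

variable [DecidableEq κ] {N N' : ℤ} {A A' : ι → Set ℤ} {C C' : κ → Set ℤ}

theorem Move1.of_equiv (f : ι × ℤ ≃ κ × ℤ)
    (hf : ∀ i n, f (i, n + N) = ((f (i, n)).1, (f (i, n)).2 + N'))
    (hA : beads A = f ⁻¹' beads C) (hA' : beads A' = f ⁻¹' beads C') :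
    Move1 N A A' → Move1 N' C C' := by
  have hf' : ∀ i n, f (i, n - N) = ((f (i, n)).1, (f (i, n)).2 - N') := fun i n => by
    rw [show f (i, n) = f (i, n - N + N) by rw [sub_add_cancel], hf]
    simp
  have hmem : ∀ i n, n ∈ A i ↔ (f (i, n)).2 ∈ C (f (i, n)).1 := fun i n =>
    Set.ext_iff.1 hA (i, n)
  have himage : ∀ {B : ι → Set ℤ} {D : κ → Set ℤ}, beads B = f ⁻¹' beads D →
      beads D = f '' beads B := fun h => by rw [h, f.image_preimage]
  rintro ⟨k₁, k₂, b₁, b₂, h₁, h₂, h₃, h₄, rfl⟩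
  refine ⟨(f (k₁, b₁)).1, (f (k₂, b₂)).1, (f (k₁, b₁)).2, (f (k₂, b₂)).2,
    (hmem _ _).1 h₁, ?_, (hmem _ _).1 h₃, ?_, beads_injective ?_⟩
  · simpa [hmem, hf'] using h₂
  · simpa [hmem, hf] using h₄
  rw [himage hA', beads_twoBeadUpdate, beads_twoBeadUpdate, himage hA, Set.image_insert_eq,
    Set.image_sdiff f.injective, Set.image_insert_eq, Set.image_sdiff f.injective,
    Set.image_singleton, Set.image_singleton, hf, hf']

theorem move1_iff_of_equiv (f : ι × ℤ ≃ κ × ℤ)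
    (hf : ∀ i n, f (i, n + N) = ((f (i, n)).1, (f (i, n)).2 + N'))
    (hA : beads A = f ⁻¹' beads C) (hA' : beads A' = f ⁻¹' beads C') :
    Move1 N A A' ↔ Move1 N' C C' := by
  refine ⟨Move1.of_equiv f hf hA hA', Move1.of_equiv f.symm (fun k x => ?_) ?_ ?_⟩
  · apply f.injective
    simp [hf]
  · rw [hA, ← Set.preimage_comp, f.self_comp_symm, Set.preimage_id]
  · rw [hA', ← Set.preimage_comp, f.self_comp_symm, Set.preimage_id]

end Beads

section Uglov

variable (e r : ℕ) [NeZero e] [NeZero r]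

def uglovIndexEquiv : Fin r × ℤ ≃ Fin e × ℤ :=
  ((((Equiv.prodCongr Fin.revPerm (Int.divModEquiv e)).trans (Equiv.prodComm _ _)).trans
    (Equiv.prodCongr (Equiv.prodComm _ _) (Equiv.refl _))).trans (Equiv.prodAssoc _ _ _)).trans
    (Equiv.prodCongr (Equiv.refl _) (Int.divModEquiv r).symm)

variable (k : Fin r) (x : ℤ)

theorem uglovIndexEquiv_apply :
    uglovIndexEquiv e r (k, x) = (Fin.ofNat e (x.natMod e), x / e * r + (k.rev : ℕ)) := rfl

theorem coe_uglovIndexEquiv_fst : ((uglovIndexEquiv e r (k, x)).1 : ℤ) = x % e := by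
  have : 0 ≤ x % e := Int.emod_nonneg x (Int.natCast_ne_zero.2 (NeZero.ne e))
  simp [uglovIndexEquiv_apply, Int.natMod, this]

theorem uglovIndexEquiv_add_level :
    uglovIndexEquiv e r (k, x + e) =
      ((uglovIndexEquiv e r (k, x)).1, (uglovIndexEquiv e r (k, x)).2 + r) := by
  have hdiv : (x + e) / e = x / e + 1 := by
    simpa using Int.add_mul_ediv_right x 1 (Int.natCast_ne_zero.2 (NeZero.ne e))
  simp only [uglovIndexEquiv_apply, Int.natMod, Int.add_emod_right, hdiv]
  exact Prod.ext rfl (by dsimp only; ring)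

theorem psi_eq_uglovIndexEquiv :
    psi e r ((k : ℕ) + 1) x =
      (uglovIndexEquiv e r (k, x)).2 * e + (uglovIndexEquiv e r (k, x)).1 := by
  rw [coe_uglovIndexEquiv_fst, uglovIndexEquiv_apply, psi, Fin.val_rev]
  change ((x / e + 1) * r - (k + 1)) * e + x % e = _
  have hk := k.isLt
  push_cast [Nat.sub_sub, Nat.cast_sub (show (k : ℕ) + 1 ≤ r by omega)]
  ring

theorem beads_psi_preimage (B : Set ℤ) :
    beads (fun k : Fin r => psi (e : ℤ) (r : ℤ) (((k : ℕ) : ℤ) + 1) ⁻¹' B) =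
      uglovIndexEquiv e r ⁻¹' beads (fun i : Fin e => quotSetB e B (i : ℕ)) := by
  ext ⟨k, x⟩
  simp only [beads, quotSetB, Set.mem_preimage, Set.mem_ofPred_eq, psi_eq_uglovIndexEquiv]

end Uglov

theorem stmt11_general (e r : ℕ) (he : 2 ≤ e) (hr : 2 ≤ r) (s : ℤ)
    (lam mu : PartitionSeq) :
    Move1 (r : ℤ) (fun i : Fin e => quotSetB e (betaSet lam s) (i : ℕ))
        (fun i : Fin e => quotSetB e (betaSet mu s) (i : ℕ)) ↔
      Move1 (e : ℤ)
        (fun k : Fin r => psi (e : ℤ) (r : ℤ) (((k : ℕ) : ℤ) + 1) ⁻¹' betaSet lam s)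
        (fun k : Fin r => psi (e : ℤ) (r : ℤ) (((k : ℕ) : ℤ) + 1) ⁻¹' betaSet mu s) := by
  have : NeZero e := ⟨by omega⟩
  have : NeZero r := ⟨by omega⟩
  exact (move1_iff_of_equiv (uglovIndexEquiv e r) (uglovIndexEquiv_add_level e r)
    (beads_psi_preimage e r _) (beads_psi_preimage e r _)).symm

theorem stmt11 (e r : ℕ) (he : 2 ≤ e) (hr : 2 ≤ r) (s : ℤ)
    (lam mu : PartitionSeq) (hsim : SimE e lam mu) :
    Move1 (r : ℤ) (fun i : Fin e => quotSetB e (betaSet lam s) (i : ℕ))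
        (fun i : Fin e => quotSetB e (betaSet mu s) (i : ℕ)) ↔
      Move1 (e : ℤ)
        (fun k : Fin r => psi (e : ℤ) (r : ℤ) (((k : ℕ) : ℤ) + 1) ⁻¹' betaSet lam s)
        (fun k : Fin r => psi (e : ℤ) (r : ℤ) (((k : ℕ) : ℤ) + 1) ⁻¹' betaSet mu s) :=
  stmt11_general e r he hr s lam mu
end

section
/- Let r ≥ 2, e ≥ 2, s ∈ ℤ, and let λ, μ be partitions with λ ∼_e μ. Then η(λ, s) ≈_r η(μ, s) if and only if Φ_r(λ, s) ≈_e Φ_r(μ, s). In other words, the composite map η ∘ Φ_r restricts to a bijection between a block of r-multipartitions at quantum characteristic e and a block of e-multipartitions at quantum characteristic r. -/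
section Aux

variable {ι ι₁ ι₂ : Type*}

def tot (B : ι → Set ℤ) : Set (ι × ℤ) := {p | p.2 ∈ B p.1}

def untot (S : Set (ι × ℤ)) : ι → Set ℤ := fun k => {x | (k, x) ∈ S}

lemma tot_untot (S : Set (ι × ℤ)) : tot (untot S) = S := by
  ext ⟨k, x⟩; rfl

lemma tot_inj {B B' : ι → Set ℤ} (h : tot B = tot B') : B = B' := by
  funext k; ext x
  exact Set.ext_iff.mp h (k, x)

lemma tot_update [DecidableEq ι] (B : ι → Set ℤ) (k : ι) (b c : ℤ) :
    tot (Function.update B k (replaceBead (B k) b c)) = insert (k, c) (tot B \ {(k, b)}) := by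
  ext ⟨j, x⟩
  by_cases hj : j = k
  · subst hj
    simp [tot, replaceBead, Prod.ext_iff]
  · simp [tot, Function.update_of_ne hj, Prod.ext_iff, hj]

lemma tot_twoBead [DecidableEq ι] (B : ι → Set ℤ) (k₁ : ι) (b₁ c₁ : ℤ) (k₂ : ι) (b₂ c₂ : ℤ) :
    tot (twoBeadUpdate B k₁ b₁ c₁ k₂ b₂ c₂) =
      insert (k₂, c₂) ((insert (k₁, c₁) (tot B \ {(k₁, b₁)})) \ {(k₂, b₂)}) := by
  unfold twoBeadUpdate
  rw [tot_update, tot_update]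

def Shape1 (N : ℤ) (a b c d : ι × ℤ) : Prop :=
  a.1 = b.1 ∧ c.1 = d.1 ∧ b.2 = a.2 - N ∧ d.2 = c.2 + N

def Shape2 (N : ℤ) (a b c d : ι × ℤ) : Prop :=
  ∃ h : ℤ, 0 < h ∧ a.1 = b.1 ∧ c.1 = d.1 ∧ b.2 = a.2 + h ∧ c.2 = d.2 + h ∧ N ∣ a.2 - d.2

def Shape (N : ℤ) (a b c d : ι × ℤ) : Prop := Shape1 N a b c d ∨ Shape2 N a b c d

def SymShape (N : ℤ) (a b c d : ι × ℤ) : Prop :=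
  Shape N a b c d ∨ Shape N a d c b ∨ Shape N c b a d ∨ Shape N c d a b

def MoveSet (N : ℤ) (T T' : Set (ι × ℤ)) : Prop :=
  ∃ a b c d : ι × ℤ, a ∈ T ∧ b ∉ T ∧ c ∈ T ∧ d ∉ T ∧ SymShape N a b c d ∧
    T' = (T \ {a, c}) ∪ {b, d}

lemma symShape_swap₁ {N : ℤ} {a b c d : ι × ℤ} (h : SymShape N a d c b) :
    SymShape N a b c d := by unfold SymShape at *; tauto

lemma symShape_swap₂ {N : ℤ} {a b c d : ι × ℤ} (h : SymShape N c b a d) :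
    SymShape N a b c d := by unfold SymShape at *; tauto

lemma symShape_swap₃ {N : ℤ} {a b c d : ι × ℤ} (h : SymShape N c d a b) :
    SymShape N a b c d := by unfold SymShape at *; tauto

lemma update_set_eq {α : Type*} {T : Set α} {a b c d : α} (hb : b ∉ T) (hc : c ∈ T) :
    insert d ((insert b (T \ {a})) \ {c}) = (T \ {a, c}) ∪ {b, d} := by
  have hbc : b ≠ c := fun h => hb (h ▸ hc)
  ext x
  simp only [Set.mem_insert_iff, Set.mem_diff, Set.mem_singleton_iff, Set.mem_union]
  constructor
  · rintro (rfl | ⟨(rfl | ⟨hx, hxa⟩), hxc⟩) <;> tauto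
  · rintro (⟨hx, hxac⟩ | rfl | rfl)
    · exact Or.inr ⟨Or.inr ⟨hx, fun h => hxac (Or.inl h)⟩, fun h => hxac (Or.inr h)⟩
    · exact Or.inr ⟨Or.inl rfl, hbc⟩
    · exact Or.inl rfl

lemma move_of_shape [DecidableEq ι] {N : ℤ} {B B' : ι → Set ℤ}
    {a b c d : ι × ℤ} (ha : a ∈ tot B) (hb : b ∉ tot B) (hc : c ∈ tot B) (hd : d ∉ tot B)
    (hsh : Shape N a b c d) (hT : tot B' = (tot B \ {a, c}) ∪ {b, d}) :
    Move1 N B B' ∨ Move2 N B B' := by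
  have hab1 : a.1 = b.1 ∧ c.1 = d.1 := by
    rcases hsh with ⟨h1, h2, _⟩ | ⟨h, _, h1, h2, _⟩ <;> exact ⟨h1, h2⟩
  have hB' : B' = twoBeadUpdate B a.1 a.2 b.2 c.1 c.2 d.2 := by
    apply tot_inj
    rw [hT, tot_twoBead]
    have e1 : ((a.1, b.2) : ι × ℤ) = b := by rw [hab1.1]
    have e2 : ((c.1, d.2) : ι × ℤ) = d := by rw [hab1.2]
    have e3 : ((a.1, a.2) : ι × ℤ) = a := rfl
    have e4 : ((c.1, c.2) : ι × ℤ) = c := rfl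
    rw [e1, e2, e3, e4, update_set_eq hb hc]
  rcases hsh with ⟨h1, h2, hb2, hd2⟩ | ⟨h, hpos, h1, h2, hb2, hc2, hdvd⟩
  · left
    refine ⟨a.1, c.1, a.2, c.2, ha, ?_, hc, ?_, ?_⟩
    · rw [← hb2, h1]; exact hb
    · rw [← hd2, h2]; exact hd
    · rw [← hb2, ← hd2]; exact hB'
  · right
    refine ⟨a.1, c.1, a.2, d.2, h, hpos, hdvd, ha, ?_, ?_, ?_, ?_⟩
    · rw [← hb2, h1]; exact hb
    · rw [h2]; exact hd
    · rw [← hc2]; exact hc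
    · rw [← hb2, ← hc2]; exact hB'

lemma moveIff [DecidableEq ι] {N : ℤ} {B B' : ι → Set ℤ} :
    (Move1 N B B' ∨ Move2 N B B') ↔ MoveSet N (tot B) (tot B') := by
  constructor
  · rintro (⟨k₁, k₂, b₁, b₂, h1, h2, h3, h4, rfl⟩ |
      ⟨k₁, k₂, b₁, b₂, h, hh, hdvd, h1, h2, h3, h4, rfl⟩)
    · refine ⟨(k₁, b₁), (k₁, b₁ - N), (k₂, b₂), (k₂, b₂ + N), h1, h2, h3, h4,
        Or.inl (Or.inl ⟨rfl, rfl, rfl, rfl⟩), ?_⟩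
      rw [tot_twoBead]
      exact update_set_eq h2 h3
    · refine ⟨(k₁, b₁), (k₁, b₁ + h), (k₂, b₂ + h), (k₂, b₂), h1, h2, h4, h3,
        Or.inl (Or.inr ⟨h, hh, rfl, rfl, rfl, rfl, hdvd⟩), ?_⟩
      rw [tot_twoBead]
      exact update_set_eq h2 h4
  · rintro ⟨a, b, c, d, ha, hb, hc, hd, hsym, hT⟩
    rcases hsym with hs | hs | hs | hs
    · exact move_of_shape ha hb hc hd hs hT
    · exact move_of_shape ha hd hc hb hs (by rw [hT, Set.pair_comm b d])
    · exact move_of_shape hc hb ha hd hs (by rw [hT, Set.pair_comm a c])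
    · exact move_of_shape hc hd ha hb hs (by rw [hT, Set.pair_comm a c, Set.pair_comm b d])

lemma moveSet_image (N₁ N₂ : ℤ) (g : (ι₁ × ℤ) ≃ (ι₂ × ℤ))
    (hsh : ∀ a b c d : ι₁ × ℤ, a ≠ b → a ≠ d → c ≠ b → c ≠ d → SymShape N₁ a b c d →
      SymShape N₂ (g a) (g b) (g c) (g d))
    {T T' : Set (ι₁ × ℤ)} (h : MoveSet N₁ T T') : MoveSet N₂ (⇑g '' T) (⇑g '' T') := by
  obtain ⟨a, b, c, d, ha, hb, hc, hd, hs, rfl⟩ := h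
  refine ⟨g a, g b, g c, g d, g.injective.mem_set_image.mpr ha,
    fun hx => hb (g.injective.mem_set_image.mp hx), g.injective.mem_set_image.mpr hc,
    fun hx => hd (g.injective.mem_set_image.mp hx),
    hsh a b c d (fun hx => hb (hx ▸ ha)) (fun hx => hd (hx ▸ ha))
      (fun hx => hb (hx ▸ hc)) (fun hx => hd (hx ▸ hc)) hs, ?_⟩
  rw [Set.image_union, Set.image_diff g.injective, Set.image_pair, Set.image_pair]

lemma blockEq_transfer [DecidableEq ι₁] [DecidableEq ι₂] (N₁ N₂ : ℤ)
    (g : (ι₁ × ℤ) ≃ (ι₂ × ℤ))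
    (hsh : ∀ a b c d : ι₁ × ℤ, a ≠ b → a ≠ d → c ≠ b → c ≠ d → SymShape N₁ a b c d →
      SymShape N₂ (g a) (g b) (g c) (g d))
    {B B' : ι₁ → Set ℤ} (h : BlockEq N₁ B B') :
    ∀ D D' : ι₂ → Set ℤ, tot D = ⇑g '' tot B → tot D' = ⇑g '' tot B' → BlockEq N₂ D D' := by
  induction h with
  | refl =>
    intro D D' hD hD'
    have : D = D' := tot_inj (hD.trans hD'.symm)
    rw [this]
    exact Relation.ReflTransGen.refl
  | @tail Bm Bf hBm hstep ih =>
    intro D D' hD hD'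
    refine Relation.ReflTransGen.tail (ih D (untot (⇑g '' tot Bm)) hD (tot_untot _)) ?_
    refine moveIff.mpr ?_
    rw [tot_untot, hD']
    exact moveSet_image N₁ N₂ g hsh (moveIff.mp hstep)

end Aux

section Phi

def kp (r : ℕ) (n : ℤ) : ℤ := (-n - 1) % (r : ℤ)
def mp (r : ℕ) (n : ℤ) : ℤ := -((-n - 1) / (r : ℤ)) - 1
def ip (e : ℕ) (x : ℤ) : ℤ := x % (e : ℤ)
def dp (e : ℕ) (x : ℤ) : ℤ := x / (e : ℤ)

lemma kp_nonneg {r : ℕ} (hr : 0 < r) (n : ℤ) : 0 ≤ kp r n :=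
  Int.emod_nonneg _ (by exact_mod_cast hr.ne')

lemma kp_lt {r : ℕ} (hr : 0 < r) (n : ℤ) : kp r n < r :=
  Int.emod_lt_of_pos _ (by exact_mod_cast hr)

lemma ip_nonneg {e : ℕ} (he : 0 < e) (x : ℤ) : 0 ≤ ip e x :=
  Int.emod_nonneg _ (by exact_mod_cast he.ne')

lemma ip_lt {e : ℕ} (he : 0 < e) (x : ℤ) : ip e x < e :=
  Int.emod_lt_of_pos _ (by exact_mod_cast he)

lemma kp_congr {r : ℕ} {n m : ℤ} (h : (r : ℤ) ∣ n - m) : kp r n = kp r m := by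
  unfold kp
  rw [Int.emod_eq_emod_iff_emod_sub_eq_zero]
  refine Int.emod_eq_zero_of_dvd ?_
  have h2 := dvd_neg.mpr h
  rwa [show -(n - m) = (-n - 1) - (-m - 1) by ring] at h2

lemma ip_congr {e : ℕ} {x y : ℤ} (h : (e : ℤ) ∣ x - y) : ip e x = ip e y := by
  unfold ip
  rw [Int.emod_eq_emod_iff_emod_sub_eq_zero]
  exact Int.emod_eq_zero_of_dvd h

lemma mp_q {r : ℕ} (hr : 0 < r) {n m q : ℤ} (h : n - m = q * r) : mp r n = mp r m + q := by
  unfold mp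
  have hr0 : (r : ℤ) ≠ 0 := by exact_mod_cast hr.ne'
  have h2 : -n - 1 = (-m - 1) + (-q) * r := by linarith
  rw [h2, Int.add_mul_ediv_right _ _ hr0]
  ring

lemma dp_q {e : ℕ} (he : 0 < e) {x y q : ℤ} (h : x - y = q * e) : dp e x = dp e y + q := by
  unfold dp
  have he0 : (e : ℤ) ≠ 0 := by exact_mod_cast he.ne'
  have h2 : x = y + q * e := by linarith
  rw [h2, Int.add_mul_ediv_right _ _ he0]

lemma kp_mp_val {r : ℕ} (n : ℤ) : (mp r n + 1) * r - (kp r n + 1) = n := by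
  have h := Int.mul_ediv_add_emod (-n - 1) (r : ℤ)
  unfold kp mp
  linear_combination -h

lemma dp_ip_val {e : ℕ} (x : ℤ) : dp e x * e + ip e x = x := by
  have h := Int.mul_ediv_add_emod x (e : ℤ)
  unfold dp ip
  linear_combination h

def phiInvF (e r : ℕ) (hr : 0 < r) : Fin e × ℤ → Fin r × ℤ :=
  fun p => (⟨(kp r p.2).toNat, by
      have h1 := kp_nonneg hr p.2
      have h2 := kp_lt hr p.2
      omega⟩,
    mp r p.2 * (e : ℤ) + ((p.1 : ℕ) : ℤ))

def phiF (e r : ℕ) (he : 0 < e) : Fin r × ℤ → Fin e × ℤ :=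
  fun p => (⟨(ip e p.2).toNat, by
      have h1 := ip_nonneg he p.2
      have h2 := ip_lt he p.2
      omega⟩,
    (dp e p.2 + 1) * (r : ℤ) - (((p.1 : ℕ) : ℤ) + 1))

lemma phi_left (e r : ℕ) (he : 0 < e) (hr : 0 < r) (p : Fin e × ℤ) :
    phiF e r he (phiInvF e r hr p) = p := by
  obtain ⟨i, n⟩ := p
  have hi0 : (0 : ℤ) ≤ ((i : ℕ) : ℤ) := by positivity
  have hie : ((i : ℕ) : ℤ) < e := by exact_mod_cast i.isLt
  have he0 : ((e : ℕ) : ℤ) ≠ 0 := by exact_mod_cast he.ne'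
  have hmod : ip e (mp r n * (e : ℤ) + ((i : ℕ) : ℤ)) = ((i : ℕ) : ℤ) := by
    unfold ip
    rw [show mp r n * (e : ℤ) + ((i : ℕ) : ℤ) = ((i : ℕ) : ℤ) + (e : ℤ) * mp r n by ring,
      Int.add_mul_emod_self_left, Int.emod_eq_of_lt hi0 hie]
  have hdiv : dp e (mp r n * (e : ℤ) + ((i : ℕ) : ℤ)) = mp r n := by
    unfold dp
    rw [show mp r n * (e : ℤ) + ((i : ℕ) : ℤ) = ((i : ℕ) : ℤ) + mp r n * (e : ℤ) by ring,
      Int.add_mul_ediv_right _ _ he0, Int.ediv_eq_zero_of_lt hi0 hie, zero_add]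
  refine Prod.ext (Fin.ext ?_) ?_
  · show (ip e (mp r n * (e : ℤ) + ((i : ℕ) : ℤ))).toNat = (i : ℕ)
    rw [hmod]
    exact Int.toNat_natCast _
  · show (dp e (mp r n * (e : ℤ) + ((i : ℕ) : ℤ)) + 1) * (r : ℤ) -
      (((kp r n).toNat : ℤ) + 1) = n
    rw [hdiv, Int.toNat_of_nonneg (kp_nonneg hr n)]
    exact kp_mp_val n

lemma phi_right (e r : ℕ) (he : 0 < e) (hr : 0 < r) (p : Fin r × ℤ) :
    phiInvF e r hr (phiF e r he p) = p := by
  obtain ⟨k, x⟩ := p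
  have hk0 : (0 : ℤ) ≤ ((k : ℕ) : ℤ) := by positivity
  have hkr : ((k : ℕ) : ℤ) < r := by exact_mod_cast k.isLt
  have hr0 : ((r : ℕ) : ℤ) ≠ 0 := by exact_mod_cast hr.ne'
  set n : ℤ := (dp e x + 1) * (r : ℤ) - (((k : ℕ) : ℤ) + 1) with hn
  have hneg : -n - 1 = ((k : ℕ) : ℤ) + (-(dp e x + 1)) * r := by rw [hn]; ring
  have hkp : kp r n = ((k : ℕ) : ℤ) := by
    unfold kp
    rw [hneg, Int.add_mul_emod_self_right, Int.emod_eq_of_lt hk0 hkr]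
  have hmp : mp r n = dp e x := by
    unfold mp
    rw [hneg, Int.add_mul_ediv_right _ _ hr0,
      Int.ediv_eq_zero_of_lt hk0 hkr, zero_add]
    ring
  refine Prod.ext (Fin.ext ?_) ?_
  · show (kp r n).toNat = (k : ℕ)
    rw [hkp]
    exact Int.toNat_natCast _
  · show mp r n * (e : ℤ) + ((ip e x).toNat : ℤ) = x
    rw [hmp, Int.toNat_of_nonneg (ip_nonneg he x)]
    exact dp_ip_val x

end Phi

section ShapeTransfer

lemma shapeF (e r : ℕ) (he : 0 < e) (hr : 0 < r) {a b c d : Fin e × ℤ}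
    (had : a ≠ d) (hsh : Shape (r : ℤ) a b c d) :
    SymShape (e : ℤ) (phiInvF e r hr a) (phiInvF e r hr b)
      (phiInvF e r hr c) (phiInvF e r hr d) := by
  rcases hsh with ⟨h1, h2, hb2, hd2⟩ | ⟨h, hpos, h1, h2, hb2, hc2, hdvd⟩
  · left; left
    have hkb : kp r a.2 = kp r b.2 := kp_congr ⟨1, by rw [hb2]; ring⟩
    have hkd : kp r c.2 = kp r d.2 := kp_congr ⟨-1, by rw [hd2]; ring⟩
    have hmb : mp r b.2 = mp r a.2 + (-1) := mp_q hr (by rw [hb2]; ring)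
    have hmd : mp r d.2 = mp r c.2 + 1 := mp_q hr (by rw [hd2]; ring)
    refine ⟨Fin.ext ?_, Fin.ext ?_, ?_, ?_⟩
    · show (kp r a.2).toNat = (kp r b.2).toNat
      rw [hkb]
    · show (kp r c.2).toNat = (kp r d.2).toNat
      rw [hkd]
    · show mp r b.2 * (e : ℤ) + ((b.1 : ℕ) : ℤ) =
        (mp r a.2 * (e : ℤ) + ((a.1 : ℕ) : ℤ)) - e
      rw [hmb, ← h1]; ring
    · show mp r d.2 * (e : ℤ) + ((d.1 : ℕ) : ℤ) =
        (mp r c.2 * (e : ℤ) + ((c.1 : ℕ) : ℤ)) + e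
      rw [hmd, ← h2]; ring
  · obtain ⟨q, hq⟩ := hdvd
    have hqd : a.2 - d.2 = q * r := by rw [hq]; ring
    have hmad : mp r a.2 = mp r d.2 + q := mp_q hr hqd
    have hkad : kp r a.2 = kp r d.2 := kp_congr ⟨q, hq⟩
    have hbc : b.2 - c.2 = q * r := by rw [hb2, hc2]; linarith [hqd]
    have hmbc : mp r b.2 = mp r c.2 + q := mp_q hr hbc
    have hkbc : kp r b.2 = kp r c.2 := kp_congr ⟨q, by rw [hbc]; ring⟩
    set Δ : ℤ := (mp r d.2 * (e : ℤ) + ((d.1 : ℕ) : ℤ)) -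
      (mp r a.2 * (e : ℤ) + ((a.1 : ℕ) : ℤ)) with hΔdef
    have hΔval : Δ = -q * (e : ℤ) + (((d.1 : ℕ) : ℤ) - ((a.1 : ℕ) : ℤ)) := by
      rw [hΔdef, hmad]; ring
    rcases lt_trichotomy Δ 0 with hΔ | hΔ | hΔ
    · right; right; left; right
      refine ⟨-Δ, by linarith, Fin.ext ?_, Fin.ext ?_, ?_, ?_, ?_⟩
      · show (kp r c.2).toNat = (kp r b.2).toNat
        rw [hkbc]
      · show (kp r a.2).toNat = (kp r d.2).toNat
        rw [hkad]
      · show mp r b.2 * (e : ℤ) + ((b.1 : ℕ) : ℤ) =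
          (mp r c.2 * (e : ℤ) + ((c.1 : ℕ) : ℤ)) + -Δ
        rw [← h1, h2]
        linear_combination (e : ℤ) * hmbc + hΔval
      · show mp r a.2 * (e : ℤ) + ((a.1 : ℕ) : ℤ) =
          (mp r d.2 * (e : ℤ) + ((d.1 : ℕ) : ℤ)) + -Δ
        linear_combination hΔdef
      · show (e : ℤ) ∣ (mp r c.2 * (e : ℤ) + ((c.1 : ℕ) : ℤ)) -
          (mp r d.2 * (e : ℤ) + ((d.1 : ℕ) : ℤ))
        rw [h2]
        exact ⟨mp r c.2 - mp r d.2, by ring⟩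
    · exfalso
      have hfa := a.1.isLt
      have hfd := d.1.isLt
      have hdd : (e : ℤ) ∣ (((d.1 : ℕ) : ℤ) - ((a.1 : ℕ) : ℤ)) :=
        ⟨q, by linarith [hΔval]⟩
      have h0 : (((d.1 : ℕ) : ℤ) - ((a.1 : ℕ) : ℤ)) = 0 := by
        refine Int.eq_zero_of_abs_lt_dvd hdd ?_
        rw [abs_lt]
        constructor <;> omega
      have hq0 : q = 0 := by
        have he0 : (0 : ℤ) < (e : ℕ) := by exact_mod_cast he
        have hqe : q * (e : ℤ) = 0 := by linarith [hΔval]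
        rcases mul_eq_zero.mp hqe with h' | h'
        · exact h'
        · exfalso; omega
      apply had
      have ha2 : a.2 = d.2 := by rw [hq0] at hqd; simp at hqd; linarith
      refine Prod.ext (Fin.ext ?_) ha2
      omega
    · right; left; right
      refine ⟨Δ, hΔ, Fin.ext ?_, Fin.ext ?_, ?_, ?_, ?_⟩
      · show (kp r a.2).toNat = (kp r d.2).toNat
        rw [hkad]
      · show (kp r c.2).toNat = (kp r b.2).toNat
        rw [hkbc]
      · show mp r d.2 * (e : ℤ) + ((d.1 : ℕ) : ℤ) =
          (mp r a.2 * (e : ℤ) + ((a.1 : ℕ) : ℤ)) + Δ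
        linear_combination -hΔdef
      · show mp r c.2 * (e : ℤ) + ((c.1 : ℕ) : ℤ) =
          (mp r b.2 * (e : ℤ) + ((b.1 : ℕ) : ℤ)) + Δ
        rw [← h1, h2]
        linear_combination -(e : ℤ) * hmbc - hΔval
      · show (e : ℤ) ∣ (mp r a.2 * (e : ℤ) + ((a.1 : ℕ) : ℤ)) -
          (mp r b.2 * (e : ℤ) + ((b.1 : ℕ) : ℤ))
        rw [← h1]
        exact ⟨mp r a.2 - mp r b.2, by ring⟩

lemma shapeG (e r : ℕ) (he : 0 < e) (hr : 0 < r) {a b c d : Fin r × ℤ}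
    (had : a ≠ d) (hsh : Shape (e : ℤ) a b c d) :
    SymShape (r : ℤ) (phiF e r he a) (phiF e r he b)
      (phiF e r he c) (phiF e r he d) := by
  rcases hsh with ⟨h1, h2, hb2, hd2⟩ | ⟨h, hpos, h1, h2, hb2, hc2, hdvd⟩
  · left; left
    have hib : ip e a.2 = ip e b.2 := ip_congr ⟨1, by rw [hb2]; ring⟩
    have hid : ip e c.2 = ip e d.2 := ip_congr ⟨-1, by rw [hd2]; ring⟩
    have hdb : dp e b.2 = dp e a.2 + (-1) := dp_q he (by rw [hb2]; ring)
    have hdd : dp e d.2 = dp e c.2 + 1 := dp_q he (by rw [hd2]; ring)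
    refine ⟨Fin.ext ?_, Fin.ext ?_, ?_, ?_⟩
    · show (ip e a.2).toNat = (ip e b.2).toNat
      rw [hib]
    · show (ip e c.2).toNat = (ip e d.2).toNat
      rw [hid]
    · show (dp e b.2 + 1) * (r : ℤ) - (((b.1 : ℕ) : ℤ) + 1) =
        ((dp e a.2 + 1) * (r : ℤ) - (((a.1 : ℕ) : ℤ) + 1)) - r
      rw [hdb, ← h1]; ring
    · show (dp e d.2 + 1) * (r : ℤ) - (((d.1 : ℕ) : ℤ) + 1) =
        ((dp e c.2 + 1) * (r : ℤ) - (((c.1 : ℕ) : ℤ) + 1)) + r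
      rw [hdd, ← h2]; ring
  · obtain ⟨q, hq⟩ := hdvd
    have hqd : a.2 - d.2 = q * e := by rw [hq]; ring
    have hdad : dp e a.2 = dp e d.2 + q := dp_q he hqd
    have hiad : ip e a.2 = ip e d.2 := ip_congr ⟨q, hq⟩
    have hbc : b.2 - c.2 = q * e := by rw [hb2, hc2]; linarith [hqd]
    have hdbc : dp e b.2 = dp e c.2 + q := dp_q he hbc
    have hibc : ip e b.2 = ip e c.2 := ip_congr ⟨q, by rw [hbc]; ring⟩
    set Δ : ℤ := ((dp e d.2 + 1) * (r : ℤ) - (((d.1 : ℕ) : ℤ) + 1)) -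
      ((dp e a.2 + 1) * (r : ℤ) - (((a.1 : ℕ) : ℤ) + 1)) with hΔdef
    have hΔval : Δ = -q * (r : ℤ) + (((a.1 : ℕ) : ℤ) - ((d.1 : ℕ) : ℤ)) := by
      rw [hΔdef, hdad]; ring
    rcases lt_trichotomy Δ 0 with hΔ | hΔ | hΔ
    · right; right; left; right
      refine ⟨-Δ, by linarith, Fin.ext ?_, Fin.ext ?_, ?_, ?_, ?_⟩
      · show (ip e c.2).toNat = (ip e b.2).toNat
        rw [hibc]
      · show (ip e a.2).toNat = (ip e d.2).toNat
        rw [hiad]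
      · show (dp e b.2 + 1) * (r : ℤ) - (((b.1 : ℕ) : ℤ) + 1) =
          ((dp e c.2 + 1) * (r : ℤ) - (((c.1 : ℕ) : ℤ) + 1)) + -Δ
        rw [← h1, h2]
        linear_combination (r : ℤ) * hdbc + hΔval
      · show (dp e a.2 + 1) * (r : ℤ) - (((a.1 : ℕ) : ℤ) + 1) =
          ((dp e d.2 + 1) * (r : ℤ) - (((d.1 : ℕ) : ℤ) + 1)) + -Δ
        linear_combination hΔdef
      · show (r : ℤ) ∣ ((dp e c.2 + 1) * (r : ℤ) - (((c.1 : ℕ) : ℤ) + 1)) -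
          ((dp e d.2 + 1) * (r : ℤ) - (((d.1 : ℕ) : ℤ) + 1))
        rw [h2]
        exact ⟨dp e c.2 - dp e d.2, by ring⟩
    · exfalso
      have hfa := a.1.isLt
      have hfd := d.1.isLt
      have hdd : (r : ℤ) ∣ (((a.1 : ℕ) : ℤ) - ((d.1 : ℕ) : ℤ)) :=
        ⟨q, by linarith [hΔval]⟩
      have h0 : (((a.1 : ℕ) : ℤ) - ((d.1 : ℕ) : ℤ)) = 0 := by
        refine Int.eq_zero_of_abs_lt_dvd hdd ?_
        rw [abs_lt]
        constructor <;> omega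
      have hq0 : q = 0 := by
        have hr0 : (0 : ℤ) < (r : ℕ) := by exact_mod_cast hr
        have hqr : q * (r : ℤ) = 0 := by linarith [hΔval]
        rcases mul_eq_zero.mp hqr with h' | h'
        · exact h'
        · exfalso; omega
      apply had
      have ha2 : a.2 = d.2 := by rw [hq0] at hqd; simp at hqd; linarith
      refine Prod.ext (Fin.ext ?_) ha2
      omega
    · right; left; right
      refine ⟨Δ, hΔ, Fin.ext ?_, Fin.ext ?_, ?_, ?_, ?_⟩
      · show (ip e a.2).toNat = (ip e d.2).toNat
        rw [hiad]
      · show (ip e c.2).toNat = (ip e b.2).toNat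
        rw [hibc]
      · show (dp e d.2 + 1) * (r : ℤ) - (((d.1 : ℕ) : ℤ) + 1) =
          ((dp e a.2 + 1) * (r : ℤ) - (((a.1 : ℕ) : ℤ) + 1)) + Δ
        linear_combination -hΔdef
      · show (dp e c.2 + 1) * (r : ℤ) - (((c.1 : ℕ) : ℤ) + 1) =
          ((dp e b.2 + 1) * (r : ℤ) - (((b.1 : ℕ) : ℤ) + 1)) + Δ
        rw [← h1, h2]
        linear_combination -(r : ℤ) * hdbc - hΔval
      · show (r : ℤ) ∣ ((dp e a.2 + 1) * (r : ℤ) - (((a.1 : ℕ) : ℤ) + 1)) -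
          ((dp e b.2 + 1) * (r : ℤ) - (((b.1 : ℕ) : ℤ) + 1))
        rw [← h1]
        exact ⟨dp e a.2 - dp e b.2, by ring⟩

lemma symShapeF (e r : ℕ) (he : 0 < e) (hr : 0 < r) {a b c d : Fin e × ℤ}
    (hab : a ≠ b) (had : a ≠ d) (hcb : c ≠ b) (hcd : c ≠ d)
    (h : SymShape (r : ℤ) a b c d) :
    SymShape (e : ℤ) (phiInvF e r hr a) (phiInvF e r hr b)
      (phiInvF e r hr c) (phiInvF e r hr d) := by
  rcases h with h | h | h | h
  · exact shapeF e r he hr had h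
  · exact symShape_swap₁ (shapeF e r he hr hab h)
  · exact symShape_swap₂ (shapeF e r he hr hcd h)
  · exact symShape_swap₃ (shapeF e r he hr hcb h)

lemma symShapeG (e r : ℕ) (he : 0 < e) (hr : 0 < r) {a b c d : Fin r × ℤ}
    (hab : a ≠ b) (had : a ≠ d) (hcb : c ≠ b) (hcd : c ≠ d)
    (h : SymShape (e : ℤ) a b c d) :
    SymShape (r : ℤ) (phiF e r he a) (phiF e r he b)
      (phiF e r he c) (phiF e r he d) := by
  rcases h with h | h | h | h
  · exact shapeG e r he hr had h
  · exact symShape_swap₁ (shapeG e r he hr hab h)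
  · exact symShape_swap₂ (shapeG e r he hr hcd h)
  · exact symShape_swap₃ (shapeG e r he hr hcb h)

def phiEq (e r : ℕ) (he : 0 < e) (hr : 0 < r) : (Fin e × ℤ) ≃ (Fin r × ℤ) where
  toFun := phiInvF e r hr
  invFun := phiF e r he
  left_inv := phi_left e r he hr
  right_inv := phi_right e r he hr

end ShapeTransfer

lemma tot_image (e r : ℕ) (he : 0 < e) (hr : 0 < r) (Bs : Set ℤ) :
    ⇑(phiEq e r he hr) '' tot (fun i : Fin e => quotSetB e Bs (i : ℕ)) =
      tot (fun k : Fin r => psi (e : ℤ) (r : ℤ) (((k : ℕ) : ℤ) + 1) ⁻¹' Bs) := by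
  rw [Equiv.image_eq_preimage_symm]
  ext p
  have hval : ((dp e p.2 + 1) * (r : ℤ) - (((p.1 : ℕ) : ℤ) + 1)) * (e : ℤ) +
      (((ip e p.2).toNat : ℕ) : ℤ) = psi (e : ℤ) (r : ℤ) (((p.1 : ℕ) : ℤ) + 1) p.2 := by
    rw [Int.toNat_of_nonneg (ip_nonneg he p.2)]
    rfl
  show ((dp e p.2 + 1) * (r : ℤ) - (((p.1 : ℕ) : ℤ) + 1)) * (e : ℤ) +
      (((ip e p.2).toNat : ℕ) : ℤ) ∈ Bs ↔
    psi (e : ℤ) (r : ℤ) (((p.1 : ℕ) : ℤ) + 1) p.2 ∈ Bs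
  rw [hval]


theorem stmt12 (e r : ℕ) (he : 2 ≤ e) (hr : 2 ≤ r) (s : ℤ)
    (lam mu : PartitionSeq) (hsim : SimE e lam mu) :
    BlockEq (r : ℤ) (fun i : Fin e => quotSetB e (betaSet lam s) (i : ℕ))
        (fun i : Fin e => quotSetB e (betaSet mu s) (i : ℕ)) ↔
      BlockEq (e : ℤ)
        (fun k : Fin r => psi (e : ℤ) (r : ℤ) (((k : ℕ) : ℤ) + 1) ⁻¹' betaSet lam s)
        (fun k : Fin r => psi (e : ℤ) (r : ℤ) (((k : ℕ) : ℤ) + 1) ⁻¹' betaSet mu s) := by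
  have he' : 0 < e := by omega
  have hr' : 0 < r := by omega
  have hlam := tot_image e r he' hr' (betaSet lam s)
  have hmu := tot_image e r he' hr' (betaSet mu s)
  constructor
  · intro h
    exact blockEq_transfer (r : ℤ) (e : ℤ) (phiEq e r he' hr')
      (fun a b c d h1 h2 h3 h4 hsh => symShapeF e r he' hr' h1 h2 h3 h4 hsh) h _ _
      hlam.symm hmu.symm
  · intro h
    refine blockEq_transfer (e : ℤ) (r : ℤ) (phiEq e r he' hr').symm
      (fun a b c d h1 h2 h3 h4 hsh => symShapeG e r he' hr' h1 h2 h3 h4 hsh) h _ _ ?_ ?_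
    · rw [← hlam, Equiv.symm_image_image]
    · rw [← hmu, Equiv.symm_image_image]
end

section
/- Let e ≥ 2, r ≥ 1 and M = (M_0,...,M_{e-1}) ∈ ℤ^e. For r-tuples of abacus configurations (λ, s), (μ, s'), one has (λ, s) ≈_e (μ, s') if and only if Str((λ, s); M) ≈_e Str((μ, s'); M); that is, the stretching operation preserves blocks. -/
/-!
Stretching is the image under the bijection `b ↦ b + e * M (b mod e)` of `ℤ`, which commutes
with translations by multiples of `e`. Any injection with this property maps a type-1 move to a
type-1 move and a type-2 move to a type-2 move, the latter possibly with the roles of the two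
components swapped, since the shift `f (b + h) - f b` may become negative. Applying this to the
bijection and to its inverse gives both directions.
-/

section Moves

variable {ι : Type*} [DecidableEq ι]

lemma image_replaceBead {f : ℤ → ℤ} (hf : Function.Injective f) (S : Set ℤ) (b c : ℤ) :
    f '' replaceBead S b c = replaceBead (f '' S) (f b) (f c) := by
  rw [replaceBead, Set.image_insert_eq, Set.image_sdiff hf, Set.image_singleton, replaceBead]

lemma image_comp_twoBeadUpdate {f : ℤ → ℤ} (hf : Function.Injective f)
    (B : ι → Set ℤ) (k₁ : ι) (b₁ c₁ : ℤ) (k₂ : ι) (b₂ c₂ : ℤ) :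
    Set.image f ∘ twoBeadUpdate B k₁ b₁ c₁ k₂ b₂ c₂ =
      twoBeadUpdate (Set.image f ∘ B) k₁ (f b₁) (f c₁) k₂ (f b₂) (f c₂) := by
  have h₁ : Set.image f ∘ Function.update B k₁ (replaceBead (B k₁) b₁ c₁) =
      Function.update (Set.image f ∘ B) k₁ (replaceBead (f '' B k₁) (f b₁) (f c₁)) := by
    rw [Function.comp_update, image_replaceBead hf]
  have h₂ : f '' Function.update B k₁ (replaceBead (B k₁) b₁ c₁) k₂ =
      Function.update (Set.image f ∘ B) k₁ (replaceBead (f '' B k₁) (f b₁) (f c₁)) k₂ :=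
    congrFun h₁ k₂
  rw [twoBeadUpdate, Function.comp_update, image_replaceBead hf, h₂, h₁]
  rfl

lemma replaceBead_comm (S : Set ℤ) {b₁ c₁ b₂ c₂ : ℤ} (h₁ : c₁ ≠ b₂) (h₂ : c₂ ≠ b₁) :
    replaceBead (replaceBead S b₁ c₁) b₂ c₂ = replaceBead (replaceBead S b₂ c₂) b₁ c₁ := by
  unfold replaceBead
  rw [Set.insert_sdiff_of_notMem _ (by simp [h₁]), Set.insert_sdiff_of_notMem _ (by simp [h₂]),
    Set.sdiff_sdiff, Set.sdiff_sdiff, Set.insert_comm, Set.union_comm]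

lemma twoBeadUpdate_comm (B : ι → Set ℤ) {k₁ k₂ : ι} {b₁ c₁ b₂ c₂ : ℤ}
    (h₁ : k₁ = k₂ → c₁ ≠ b₂) (h₂ : k₁ = k₂ → c₂ ≠ b₁) :
    twoBeadUpdate B k₁ b₁ c₁ k₂ b₂ c₂ = twoBeadUpdate B k₂ b₂ c₂ k₁ b₁ c₁ := by
  unfold twoBeadUpdate
  funext k
  by_cases hk : k₁ = k₂
  · subst hk
    by_cases h : k = k₁
    · subst h
      simp only [Function.update_self]
      exact replaceBead_comm _ (h₁ rfl) (h₂ rfl)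
    · simp [Function.update_of_ne h]
  · by_cases hA : k = k₁ <;> by_cases hB : k = k₂ <;>
      simp [hA, hB, hk, Ne.symm hk]

/-- A type-2 exchange with a negative shift `h` is the type-2 move with shift `-h` in which the
two components trade places. -/
lemma move2_of_ne_zero {N : ℤ} {B : ι → Set ℤ} {k₁ k₂ : ι} {b₁ b₂ h : ℤ} (hh : h ≠ 0)
    (hdvd : N ∣ b₁ - b₂) (hb₁ : b₁ ∈ B k₁) (hb₁h : b₁ + h ∉ B k₁) (hb₂ : b₂ ∉ B k₂)
    (hb₂h : b₂ + h ∈ B k₂) :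
    Move2 N B (twoBeadUpdate B k₁ b₁ (b₁ + h) k₂ (b₂ + h) b₂) := by
  rcases hh.lt_or_gt with hneg | hpos
  · have hdvd' : N ∣ b₂ + h - (b₁ + h) := by
      rw [add_sub_add_right_eq_sub, ← neg_sub]; exact hdvd.neg_right
    refine ⟨k₂, k₁, b₂ + h, b₁ + h, -h, neg_pos.2 hneg, hdvd', hb₂h, by simpa using hb₂,
      hb₁h, by simpa using hb₁, ?_⟩
    simp only [add_neg_cancel_right]
    refine twoBeadUpdate_comm B (fun hk hb => ?_) (fun hk hb => ?_)
    · exact hb₁h (by rw [hb, hk]; exact hb₂h)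
    · exact hb₂ (by rw [hb, ← hk]; exact hb₁)
  · exact ⟨k₁, k₂, b₁, b₂, h, hpos, hdvd, hb₁, hb₁h, hb₂, hb₂h, rfl⟩

variable {N : ℤ} {f : ℤ → ℤ} {B B' : ι → Set ℤ}

lemma move1_image (hf : Function.Injective f) (hN : ∀ b c, N ∣ c → f (b + c) = f b + c)
    (h : Move1 N B B') : Move1 N (Set.image f ∘ B) (Set.image f ∘ B') := by
  obtain ⟨k₁, k₂, b₁, b₂, hb₁, hb₁N, hb₂, hb₂N, rfl⟩ := h
  have hsub : f (b₁ - N) = f b₁ - N := by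
    rw [sub_eq_add_neg, hN _ _ (dvd_neg.2 dvd_rfl), ← sub_eq_add_neg]
  have hadd : f (b₂ + N) = f b₂ + N := hN _ _ dvd_rfl
  refine ⟨k₁, k₂, f b₁, f b₂, Set.mem_image_of_mem f hb₁, ?_, Set.mem_image_of_mem f hb₂, ?_, ?_⟩
  · rwa [← hsub, Function.comp_apply, hf.mem_set_image]
  · rwa [← hadd, Function.comp_apply, hf.mem_set_image]
  · rw [image_comp_twoBeadUpdate hf, hsub, hadd]

lemma move2_image (hf : Function.Injective f) (hN : ∀ b c, N ∣ c → f (b + c) = f b + c)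
    (h : Move2 N B B') : Move2 N (Set.image f ∘ B) (Set.image f ∘ B') := by
  obtain ⟨k₁, k₂, b₁, b₂, h, hpos, hdvd, hb₁, hb₁h, hb₂, hb₂h, rfl⟩ := h
  have hf₁ : f b₁ = f b₂ + (b₁ - b₂) := by simpa using hN b₂ _ hdvd
  have hf₁h : f (b₁ + h) = f (b₂ + h) + (b₁ - b₂) := by
    have := hN (b₂ + h) _ hdvd
    rwa [show b₂ + h + (b₁ - b₂) = b₁ + h by ring] at this
  obtain ⟨h', hf₁', hf₂'⟩ : ∃ h', f (b₁ + h) = f b₁ + h' ∧ f (b₂ + h) = f b₂ + h' :=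
    ⟨f (b₁ + h) - f b₁, by ring, by rw [hf₁, hf₁h]; ring⟩
  have hh' : h' ≠ 0 := fun h0 => by
    have := hf (hf₁'.trans (by rw [h0, add_zero])); omega
  have hdvd' : N ∣ f b₁ - f b₂ := by rwa [hf₁, add_sub_cancel_left]
  rw [image_comp_twoBeadUpdate hf, hf₁', hf₂']
  refine move2_of_ne_zero hh' hdvd' (Set.mem_image_of_mem f hb₁) ?_ ?_ ?_
  · rwa [← hf₁', Function.comp_apply, hf.mem_set_image]
  · rwa [Function.comp_apply, hf.mem_set_image]
  · exact hf₂' ▸ Set.mem_image_of_mem f hb₂h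

lemma blockEq_image (hf : Function.Injective f) (hN : ∀ b c, N ∣ c → f (b + c) = f b + c)
    (h : BlockEq N B B') : BlockEq N (Set.image f ∘ B) (Set.image f ∘ B') :=
  Relation.ReflTransGen.lift (r := fun X Y => Move1 N X Y ∨ Move2 N X Y) (Set.image f ∘ ·)
    (fun _ _ => Or.imp (move1_image hf hN) (move2_image hf hN)) _ _ h

lemma blockEq_image_iff (f : ℤ ≃ ℤ) (hN : ∀ b c, N ∣ c → f (b + c) = f b + c) :
    BlockEq N (Set.image f ∘ B) (Set.image f ∘ B') ↔ BlockEq N B B' := by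
  refine ⟨fun h => ?_, blockEq_image f.injective hN⟩
  have hN' : ∀ b c, N ∣ c → f.symm (b + c) = f.symm b + c := fun b c hc =>
    f.symm_apply_eq.2 (by rw [hN _ _ hc, f.apply_symm_apply])
  have hcancel : ∀ X : ι → Set ℤ, Set.image f.symm ∘ (Set.image f ∘ X) = X := fun X =>
    funext fun k => f.symm_image_image (X k)
  simpa only [hcancel] using blockEq_image f.symm.injective hN' h

end Moves

def stretch (e : ℕ) (M : ℕ → ℤ) (b : ℤ) : ℤ := b + e * M (b % e).toNat

lemma stretch_add_of_dvd {e : ℕ} (M : ℕ → ℤ) (b : ℤ) {c : ℤ} (hc : (e : ℤ) ∣ c) :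
    stretch e M (b + c) = stretch e M b + c := by
  obtain ⟨t, rfl⟩ := hc
  rw [stretch, stretch, Int.add_mul_emod_self_left]
  ring

lemma stretch_neg_stretch (e : ℕ) (M : ℕ → ℤ) (b : ℤ) : stretch e (-M) (stretch e M b) = b := by
  rw [stretch, stretch, Int.add_mul_emod_self_left, Pi.neg_apply]
  ring

def stretchEquiv (e : ℕ) (M : ℕ → ℤ) : ℤ ≃ ℤ where
  toFun := stretch e M
  invFun := stretch e (-M)
  left_inv := stretch_neg_stretch e M
  right_inv b := by simpa using stretch_neg_stretch e (-M) b

lemma strSet_eq_image {e : ℕ} (he : 0 < e) (M : ℕ → ℤ) (B : Set ℤ) :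
    strSet e M B = stretch e M '' B := by
  have he' : (0 : ℤ) < e := by exact_mod_cast he
  ext b
  constructor
  · rintro ⟨i, hi, m, hm, rfl⟩
    have hmod : (m * e + i) % (e : ℤ) = i := by
      rw [add_comm, Int.add_mul_emod_self_right]
      exact Int.emod_eq_of_lt (by positivity) (by exact_mod_cast hi)
    refine ⟨m * e + i, hm, ?_⟩
    rw [stretch, hmod, Int.toNat_natCast]
    ring
  · rintro ⟨x, hx, rfl⟩
    have h0 : 0 ≤ x % (e : ℤ) := Int.emod_nonneg x he'.ne'
    have hdiv : x / e * e + x % e = x := Int.ediv_mul_add_emod x e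
    refine ⟨(x % (e : ℤ)).toNat, by have := Int.emod_lt_of_pos x he'; omega, x / e, ?_, ?_⟩
    · rwa [Int.toNat_of_nonneg h0, hdiv]
    · rw [stretch, Int.toNat_of_nonneg h0]
      linear_combination -hdiv

theorem stmt14_general (e r : ℕ) (he : 2 ≤ e) (M : ℕ → ℤ)
    (lam mu : Fin r → PartitionSeq) (s s' : Fin r → ℤ) :
    BlockEq (e : ℤ) (fun k => betaSet (lam k) (s k)) (fun k => betaSet (mu k) (s' k)) ↔
      BlockEq (e : ℤ) (fun k => strSet e M (betaSet (lam k) (s k)))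
        (fun k => strSet e M (betaSet (mu k) (s' k))) := by
  simp only [strSet_eq_image (by omega : 0 < e)]
  exact (blockEq_image_iff (stretchEquiv e M) (stretch_add_of_dvd M)).symm

theorem stmt14 (e r : ℕ) (he : 2 ≤ e) (hr : 1 ≤ r) (M : ℕ → ℤ)
    (lam mu : Fin r → PartitionSeq) (s s' : Fin r → ℤ) :
    BlockEq (e : ℤ) (fun k => betaSet (lam k) (s k)) (fun k => betaSet (mu k) (s' k)) ↔
      BlockEq (e : ℤ) (fun k => strSet e M (betaSet (lam k) (s k)))
        (fun k => strSet e M (betaSet (mu k) (s' k))) :=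
  stmt14_general e r he M lam mu s s'
end
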